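/- arXiv:1301.0973 — 2 statements merged into one kernel-verified Lean document; each statement's English description precedes it below -/
import Mathlib

section
/- Let n ≥ 3, set N = 2^n, and let A be the adjacency matrix of the hypercube Q_n, indexed by Fin N via binary representation (two vertices are adjacent iff their binary representations differ in exactly one bit), viewed as a signed graph. Then for every integer k with 2 ≤ k ≤ N−2, the exterior power ∧^k A is not balanced. -/
open Matrix Finset

def IsSignedMatrix {ι : Type*} (B : Matrix ι ι ℝ) : Prop :=
  B.IsSymm ∧ (∀ i, B i i = 0) ∧ ∀ i j, B i j = -1 ∨ B i j = 0 ∨ B i j = 1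

def IsBalancedMatrix {ι : Type*} [Fintype ι] (B : Matrix ι ι ℝ) : Prop :=
  ∃ D : Matrix ι ι ℝ, D.IsDiag ∧ (∀ i, D i i = 1 ∨ D i i = -1) ∧
    D * B * D = Matrix.of fun i j => |B i j|

def cartPow {n : ℕ} (A : Matrix (Fin n) (Fin n) ℝ) (k : ℕ) :
    Matrix (Fin k → Fin n) (Fin k → Fin n) ℝ :=
  Matrix.of fun u v => ∑ i : Fin k, A (u i) (v i) *
    ∏ j ∈ Finset.univ.erase i, (if u j = v j then (1 : ℝ) else 0)

noncomputable def enumOf {n k : ℕ} (r : LinearOrder (Fin n)) (S : Finset (Fin n))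
    (h : S.card = k) : Fin k → Fin n :=
  fun i => ((@Finset.orderIsoOfFin (Fin n) r S k h) i : Fin n)

noncomputable def altOf {n : ℕ} (k : ℕ) (r : LinearOrder (Fin n)) :
    Matrix (Fin k → Fin n) {S : Finset (Fin n) // S.card = k} ℝ :=
  Matrix.of fun u S =>
    (Real.sqrt (Nat.factorial k))⁻¹ *
      ∑ π : Equiv.Perm (Fin k),
        if u = enumOf r S.1 S.2 ∘ π then ((Equiv.Perm.sign π : ℤ) : ℝ) else 0

noncomputable def alt (n k : ℕ) :
    Matrix (Fin k → Fin n) {S : Finset (Fin n) // S.card = k} ℝ :=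
  altOf k inferInstance

noncomputable def extPow {n : ℕ} (A : Matrix (Fin n) (Fin n) ℝ) (k : ℕ) :
    Matrix {S : Finset (Fin n) // S.card = k} {S : Finset (Fin n) // S.card = k} ℝ :=
  (alt n k)ᵀ * cartPow A k * alt n k

def IsPathMatrix {n : ℕ} (A : Matrix (Fin n) (Fin n) ℝ) : Prop :=
  ∃ g : Equiv.Perm (Fin n), ∀ i j : Fin n,
    |A (g i) (g j)| = 1 ↔ ((i : ℤ) - j = 1 ∨ (j : ℤ) - i = 1)

def IsCycleMatrix {n : ℕ} (A : Matrix (Fin n) (Fin n) ℝ) : Prop :=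
  3 ≤ n ∧ ∃ g : Equiv.Perm (Fin n), ∀ i j : Fin n,
    |A (g i) (g j)| = 1 ↔
      ((i : ℤ) - j ≡ 1 [ZMOD (n : ℤ)] ∨ (i : ℤ) - j ≡ -1 [ZMOD (n : ℤ)])

def signedAdjGraph {n : ℕ} (A : Matrix (Fin n) (Fin n) ℝ) : SimpleGraph (Fin n) :=
  SimpleGraph.fromRel (fun u v => |A u v| = 1)

def cubeAdj (n : ℕ) : Matrix (Fin (2 ^ n)) (Fin (2 ^ n)) ℝ :=
  Matrix.of fun x y =>
    if ((Finset.range n).filter fun i => x.val.testBit i ≠ y.val.testBit i).card = 1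
    then 1 else 0

section Aux
open Equiv Equiv.Perm

lemma cartPow_eq {N k : ℕ} (A : Matrix (Fin N) (Fin N) ℝ) (u v : Fin k → Fin N) :
    cartPow A k u v = ∑ i : Fin k, A (u i) (v i) *
      ∏ j : Fin k, (if j = i then (1:ℝ) else if u j = v j then (1 : ℝ) else 0) := by
  unfold cartPow
  simp only [Matrix.of_apply]
  refine Finset.sum_congr rfl fun i _ => ?_
  congr 1
  rw [← Finset.prod_erase (f := fun j => if j = i then (1:ℝ) else if u j = v j then (1:ℝ) else 0)]
  · exact Finset.prod_congr rfl fun j hj => by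
      simp [Finset.mem_erase.1 hj |>.1]
  · simp

lemma cartPow_comp {N k : ℕ} (A : Matrix (Fin N) (Fin N) ℝ) (u v : Fin k → Fin N)
    (ρ : Equiv.Perm (Fin k)) :
    cartPow A k (u ∘ ρ) (v ∘ ρ) = cartPow A k u v := by
  rw [cartPow_eq, cartPow_eq]
  refine Fintype.sum_equiv ρ _ _ fun i => ?_
  simp only [Function.comp_apply]
  congr 1
  refine Fintype.prod_equiv ρ _ _ fun j => ?_
  simp [EmbeddingLike.apply_eq_iff_eq]

lemma collapse {α ι : Type*} [Fintype α] [DecidableEq α] [Fintype ι] [DecidableEq ι]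
    (c : ℝ) (s : ι → ℝ) (g : ι → α) (F : α → ℝ) :
    ∑ u : α, (c * ∑ π : ι, if u = g π then s π else 0) * F u
      = c * ∑ π : ι, s π * F (g π) := by
  calc ∑ u : α, (c * ∑ π : ι, if u = g π then s π else 0) * F u
      = ∑ u : α, ∑ π : ι, c * ((if u = g π then s π else 0) * F u) := by
        refine Finset.sum_congr rfl fun u _ => ?_
        rw [Finset.mul_sum, Finset.sum_mul]
        exact Finset.sum_congr rfl fun π _ => by ring
    _ = ∑ π : ι, ∑ u : α, c * ((if u = g π then s π else 0) * F u) := Finset.sum_comm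
    _ = c * ∑ π : ι, s π * F (g π) := by
        rw [Finset.mul_sum]
        refine Finset.sum_congr rfl fun π _ => ?_
        rw [← Finset.mul_sum]
        congr 1
        rw [Finset.sum_eq_single (g π)]
        · simp
        · intro u _ hu; simp [hu]
        · simp

lemma collapse2 {α ι : Type*} [Fintype α] [DecidableEq α] [Fintype ι] [DecidableEq ι]
    (c : ℝ) (s : ι → ℝ) (g h : ι → α) (F : α → α → ℝ) :
    (∑ u : α, ∑ v : α,
      (c * ∑ π : ι, if u = g π then s π else 0) * F u v *
        (c * ∑ σ : ι, if v = h σ then s σ else 0))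
      = (c * c) * ∑ π : ι, ∑ σ : ι, s π * s σ * F (g π) (h σ) := by
  have step1 : ∀ u : α, (∑ v : α,
      (c * ∑ π : ι, if u = g π then s π else 0) * F u v *
        (c * ∑ σ : ι, if v = h σ then s σ else 0))
      = (c * ∑ π : ι, if u = g π then s π else 0) * (c * ∑ σ : ι, s σ * F u (h σ)) := by
    intro u
    calc (∑ v : α,
        (c * ∑ π : ι, if u = g π then s π else 0) * F u v *
          (c * ∑ σ : ι, if v = h σ then s σ else 0))
        = ∑ v : α, (c * ∑ σ : ι, if v = h σ then s σ else 0) *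
            ((c * ∑ π : ι, if u = g π then s π else 0) * F u v) := by
          exact Finset.sum_congr rfl fun v _ => by ring
      _ = c * ∑ σ : ι, s σ *
            ((c * ∑ π : ι, if u = g π then s π else 0) * F u (h σ)) :=
          collapse c s h _
      _ = (c * ∑ π : ι, if u = g π then s π else 0) * (c * ∑ σ : ι, s σ * F u (h σ)) := by
          simp only [Finset.mul_sum]
          exact Finset.sum_congr rfl fun σ _ => by ring
  calc (∑ u : α, ∑ v : α,
      (c * ∑ π : ι, if u = g π then s π else 0) * F u v *
        (c * ∑ σ : ι, if v = h σ then s σ else 0))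
      = ∑ u : α, (c * ∑ π : ι, if u = g π then s π else 0) *
          (c * ∑ σ : ι, s σ * F u (h σ)) := Finset.sum_congr rfl fun u _ => step1 u
    _ = c * ∑ π : ι, s π * (c * ∑ σ : ι, s σ * F (g π) (h σ)) :=
        collapse c s g _
    _ = (c * c) * ∑ π : ι, ∑ σ : ι, s π * s σ * F (g π) (h σ) := by
        simp only [Finset.mul_sum]
        exact Finset.sum_congr rfl fun π _ =>
          Finset.sum_congr rfl fun σ _ => by ring

end Aux
section Ext
open Equiv Equiv.Perm

lemma sign_mul_real {k : ℕ} (π τ : Equiv.Perm (Fin k)) :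
    ((Equiv.Perm.sign π : ℤ) : ℝ) * ((Equiv.Perm.sign (τ * π) : ℤ) : ℝ)
      = ((Equiv.Perm.sign τ : ℤ) : ℝ) := by
  rw [Equiv.Perm.sign_mul]
  push_cast
  rcases Int.units_eq_one_or (Equiv.Perm.sign π) with h | h <;>
    rcases Int.units_eq_one_or (Equiv.Perm.sign τ) with h' | h' <;>
      simp [h, h']

lemma extPow_apply {N k : ℕ} (A : Matrix (Fin N) (Fin N) ℝ)
    (S T : {S : Finset (Fin N) // S.card = k}) :
    extPow A k S T = ∑ τ : Equiv.Perm (Fin k), ((Equiv.Perm.sign τ : ℤ) : ℝ) *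
      cartPow A k (enumOf inferInstance S.1 S.2) (enumOf inferInstance T.1 T.2 ∘ τ) := by
  set eS := enumOf (inferInstance : LinearOrder (Fin N)) S.1 S.2 with heS
  set eT := enumOf (inferInstance : LinearOrder (Fin N)) T.1 T.2 with heT
  set c : ℝ := (Real.sqrt (Nat.factorial k))⁻¹ with hc
  have hstep : extPow A k S T = ∑ u : Fin k → Fin N, ∑ v : Fin k → Fin N,
      (c * ∑ π : Equiv.Perm (Fin k),
        if u = eS ∘ π then ((Equiv.Perm.sign π : ℤ) : ℝ) else 0) *
      cartPow A k u v *
      (c * ∑ σ : Equiv.Perm (Fin k),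
        if v = eT ∘ σ then ((Equiv.Perm.sign σ : ℤ) : ℝ) else 0) := by
    rw [extPow, Matrix.mul_apply]
    have hinner : ∀ v, ((alt N k)ᵀ * cartPow A k) S v * alt N k v T
        = ∑ u : Fin k → Fin N, alt N k u S * cartPow A k u v * alt N k v T := by
      intro v
      rw [Matrix.mul_apply, Finset.sum_mul]
      exact Finset.sum_congr rfl fun u _ => by rw [Matrix.transpose_apply]
    rw [Finset.sum_congr rfl fun v _ => hinner v, Finset.sum_comm]
    refine Finset.sum_congr rfl fun u _ => Finset.sum_congr rfl fun v _ => ?_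
    simp only [alt, altOf, Matrix.of_apply, heS, heT, hc]
  rw [hstep, collapse2 c (fun π => ((Equiv.Perm.sign π : ℤ) : ℝ)) (fun π => eS ∘ π)
    (fun σ => eT ∘ σ) (fun u v => cartPow A k u v)]
  have hCC : ∀ π σ : Equiv.Perm (Fin k),
      cartPow A k (eS ∘ π) (eT ∘ σ) = cartPow A k eS (eT ∘ ⇑(σ * π⁻¹ : Equiv.Perm (Fin k))) := by
    intro π σ
    rw [← cartPow_comp A eS (eT ∘ ⇑(σ * π⁻¹ : Equiv.Perm (Fin k))) π]
    congr 1
    funext j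
    simp [Equiv.Perm.mul_apply]
  have hinner : ∀ π : Equiv.Perm (Fin k),
      (∑ σ : Equiv.Perm (Fin k), ((Equiv.Perm.sign π : ℤ) : ℝ) *
        ((Equiv.Perm.sign σ : ℤ) : ℝ) * cartPow A k (eS ∘ π) (eT ∘ σ))
      = ∑ τ : Equiv.Perm (Fin k), ((Equiv.Perm.sign τ : ℤ) : ℝ) *
          cartPow A k eS (eT ∘ τ) := by
    intro π
    rw [← Equiv.sum_comp (Equiv.mulRight π)
      (fun σ => ((Equiv.Perm.sign π : ℤ) : ℝ) * ((Equiv.Perm.sign σ : ℤ) : ℝ) *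
        cartPow A k (eS ∘ π) (eT ∘ σ))]
    refine Finset.sum_congr rfl fun τ _ => ?_
    simp only [Equiv.coe_mulRight]
    rw [hCC π (τ * π), sign_mul_real]
    congr 2
    simp
  rw [Finset.sum_congr rfl fun π _ => hinner π, Finset.sum_const]
  simp only [Finset.card_univ, Fintype.card_perm, Fintype.card_fin, nsmul_eq_mul]
  rw [← mul_assoc]
  have : c * c * (Nat.factorial k : ℝ) = 1 := by
    rw [hc, ← mul_inv]
    rw [Real.mul_self_sqrt (by positivity)]
    field_simp
  rw [this, one_mul]

end Ext
section Key

lemma key_sum {N k : ℕ} (A : Matrix (Fin N) (Fin N) ℝ) (u w : Fin k → Fin N) (i0 : Fin k)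
    (H1 : ∀ j, j ≠ i0 → u j = w j) (H2 : ∀ j, u i0 ≠ w j) (Hw : Function.Injective w) :
    (∑ τ : Equiv.Perm (Fin k), ((Equiv.Perm.sign τ : ℤ) : ℝ) * cartPow A k u (w ∘ τ))
      = A (u i0) (w i0) := by
  rw [Finset.sum_eq_single (1 : Equiv.Perm (Fin k))]
  · simp only [Equiv.Perm.sign_one, Units.val_one, Int.cast_one, one_mul]
    have hw1 : w ∘ ⇑(1 : Equiv.Perm (Fin k)) = w := by funext j; simp
    rw [hw1, cartPow_eq, Finset.sum_eq_single i0]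
    · have : ∀ j : Fin k, (if j = i0 then (1:ℝ) else if u j = w j then (1:ℝ) else 0) = 1 := by
        intro j
        by_cases hj : j = i0
        · simp [hj]
        · simp [hj, H1 j hj]
      rw [Finset.prod_congr rfl fun j _ => this j]
      simp
    · intro i _ hi
      have : (∏ j : Fin k, (if j = i then (1:ℝ) else if u j = w j then (1:ℝ) else 0)) = 0 := by
        apply Finset.prod_eq_zero (Finset.mem_univ i0)
        simp [Ne.symm hi, H2 i0]
      rw [this, mul_zero]
    · simp
  · intro τ _ hτ
    have hzero : cartPow A k u (w ∘ τ) = 0 := by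
      rw [cartPow_eq]
      apply Finset.sum_eq_zero
      intro i _
      have hex : ∃ j, j ≠ i ∧ u j ≠ w (τ j) := by
        by_cases hi : i = i0
        · obtain ⟨j0, hj0⟩ : ∃ j0, τ j0 ≠ j0 := by
            by_contra h
            push_neg at h
            exact hτ (Equiv.ext fun x => h x)
          by_cases hj0i : j0 = i0
          · have hti0 : τ i0 ≠ i0 := by rw [← hj0i]; exact hj0
            have hne : τ⁻¹ i0 ≠ i0 := by
              intro h
              have := congrArg τ h
              rw [Equiv.Perm.inv_def, Equiv.apply_symm_apply] at this
              exact hti0 this.symm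
            refine ⟨τ⁻¹ i0, by rw [hi]; exact hne, ?_⟩
            rw [H1 _ hne]
            simp only [Equiv.Perm.inv_def, Equiv.apply_symm_apply]
            intro h
            exact hne (Hw h)
          · refine ⟨j0, by rw [hi]; exact hj0i, ?_⟩
            rw [H1 _ hj0i]
            intro h
            exact hj0 (Hw h).symm
        · exact ⟨i0, fun h => hi h.symm, H2 (τ i0)⟩
      obtain ⟨j, hji, hjne⟩ := hex
      have : (∏ j : Fin k, (if j = i then (1:ℝ) else if u j = (w ∘ τ) j then (1:ℝ) else 0)) = 0 := by
        apply Finset.prod_eq_zero (Finset.mem_univ j)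
        simp [hji, Function.comp, hjne]
      rw [this, mul_zero]
    rw [hzero, mul_zero]
  · simp

end Key
section Tup

def tupf (N k : ℕ) (p q : Fin N) (h : k + 2 ≤ N) : Fin k → Fin N :=
  fun i => if i.1 = 0 then p else if i.1 = 1 then q else ⟨i.1 + 2, by have := i.2; omega⟩

lemma tupf_strictMono {N k : ℕ} (p q : Fin N) (h : k + 2 ≤ N)
    (hpq : p.1 < q.1) (hq : q.1 < 4) : StrictMono (tupf N k p q h) := by
  intro i j hij
  have hij' : i.1 < j.1 := hij
  simp only [tupf, Fin.lt_def]
  split_ifs <;> simp_all <;> omega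

lemma tupf_val {N k : ℕ} (p q : Fin N) (h : k + 2 ≤ N) (i : Fin k) :
    (tupf N k p q h i).1 = if i.1 = 0 then p.1 else if i.1 = 1 then q.1 else i.1 + 2 := by
  simp only [tupf]
  split_ifs <;> rfl

lemma enumOf_image {N k : ℕ} (f : Fin k → Fin N) (hf : StrictMono f)
    (hcard : (Finset.image f Finset.univ).card = k) :
    enumOf inferInstance (Finset.image f Finset.univ) hcard = f := by
  have := Finset.orderEmbOfFin_unique (s := Finset.image f Finset.univ) hcard
    (f := f) (fun x => Finset.mem_image_of_mem f (Finset.mem_univ x)) hf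
  funext i
  rw [enumOf]
  rw [Finset.coe_orderIsoOfFin_apply]
  exact (congrFun this i).symm

lemma card_image_tupf {N k : ℕ} (f : Fin k → Fin N) (hf : StrictMono f) :
    (Finset.image f Finset.univ).card = k := by
  rw [Finset.card_image_of_injective _ hf.injective, Finset.card_univ, Fintype.card_fin]

end Tup
section Key2

lemma key_sum' {N k : ℕ} (A : Matrix (Fin N) (Fin N) ℝ) (u w : Fin k → Fin N)
    (τ0 : Equiv.Perm (Fin k)) (i0 : Fin k)
    (H1 : ∀ j, j ≠ i0 → u j = w (τ0 j)) (H2 : ∀ j, u i0 ≠ w j)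
    (Hw : Function.Injective w) :
    (∑ τ : Equiv.Perm (Fin k), ((Equiv.Perm.sign τ : ℤ) : ℝ) * cartPow A k u (w ∘ τ))
      = ((Equiv.Perm.sign τ0 : ℤ) : ℝ) * A (u i0) (w (τ0 i0)) := by
  have hre : (∑ τ : Equiv.Perm (Fin k), ((Equiv.Perm.sign τ : ℤ) : ℝ) * cartPow A k u (w ∘ τ))
      = ∑ σ : Equiv.Perm (Fin k), ((Equiv.Perm.sign (τ0 * σ) : ℤ) : ℝ) *
          cartPow A k u (w ∘ ⇑(τ0 * σ)) := by
    exact (Equiv.sum_comp (Equiv.mulLeft τ0)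
      (fun τ => ((Equiv.Perm.sign τ : ℤ) : ℝ) * cartPow A k u (w ∘ τ))).symm
  rw [hre]
  have hcomp : ∀ σ : Equiv.Perm (Fin k), w ∘ ⇑(τ0 * σ) = (w ∘ ⇑τ0) ∘ ⇑σ := by
    intro σ; funext j; simp [Equiv.Perm.mul_apply]
  have hsign : ∀ σ : Equiv.Perm (Fin k),
      ((Equiv.Perm.sign (τ0 * σ) : ℤ) : ℝ)
        = ((Equiv.Perm.sign τ0 : ℤ) : ℝ) * ((Equiv.Perm.sign σ : ℤ) : ℝ) := by
    intro σ; rw [Equiv.Perm.sign_mul]; push_cast; ring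
  calc (∑ σ : Equiv.Perm (Fin k), ((Equiv.Perm.sign (τ0 * σ) : ℤ) : ℝ) *
          cartPow A k u (w ∘ ⇑(τ0 * σ)))
      = ((Equiv.Perm.sign τ0 : ℤ) : ℝ) * ∑ σ : Equiv.Perm (Fin k),
          ((Equiv.Perm.sign σ : ℤ) : ℝ) * cartPow A k u ((w ∘ ⇑τ0) ∘ ⇑σ) := by
        rw [Finset.mul_sum]
        exact Finset.sum_congr rfl fun σ _ => by rw [hcomp σ, hsign σ]; ring
    _ = ((Equiv.Perm.sign τ0 : ℤ) : ℝ) * A (u i0) (w (τ0 i0)) := by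
        congr 1
        exact key_sum A u (w ∘ ⇑τ0) i0 H1 (fun j => H2 (τ0 j))
          (Hw.comp τ0.injective)

lemma bit_small (x : ℕ) (hx : x < 4) (i : ℕ) : x.testBit (i + 2) = false := by
  apply Nat.testBit_eq_false_of_lt
  calc x < 4 := hx
    _ = 2 ^ 2 := rfl
    _ ≤ 2 ^ (i + 2) := Nat.pow_le_pow_right (by norm_num) (by omega)

lemma cubeAdj_pair {n : ℕ} (hn : 3 ≤ n) (x y : Fin (2 ^ n)) (b : ℕ) (hb : b < 2)
    (hbit : ∀ i, (x.1.testBit i ≠ y.1.testBit i) ↔ i = b) :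
    cubeAdj n x y = 1 := by
  rw [cubeAdj]
  simp only [Matrix.of_apply]
  have hfil : (Finset.range n).filter (fun i => x.1.testBit i ≠ y.1.testBit i) = {b} := by
    ext i
    simp only [Finset.mem_filter, Finset.mem_range, hbit i, Finset.mem_singleton]
    constructor
    · rintro ⟨_, h⟩; exact h
    · rintro rfl; exact ⟨by omega, rfl⟩
  rw [hfil]
  simp

lemma hbit01 : ∀ i, ((0 : ℕ).testBit i ≠ (1 : ℕ).testBit i) ↔ i = 0 := by
  intro i
  match i with
  | 0 => decide
  | 1 => decide
  | (i+2) => simp [bit_small 0 (by norm_num) i, bit_small 1 (by norm_num) i]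

lemma hbit32 : ∀ i, ((3 : ℕ).testBit i ≠ (2 : ℕ).testBit i) ↔ i = 0 := by
  intro i
  match i with
  | 0 => decide
  | 1 => decide
  | (i+2) => simp [bit_small 3 (by norm_num) i, bit_small 2 (by norm_num) i]

lemma hbit13 : ∀ i, ((1 : ℕ).testBit i ≠ (3 : ℕ).testBit i) ↔ i = 1 := by
  intro i
  match i with
  | 0 => decide
  | 1 => decide
  | (i+2) => simp [bit_small 1 (by norm_num) i, bit_small 3 (by norm_num) i]

lemma hbit20 : ∀ i, ((2 : ℕ).testBit i ≠ (0 : ℕ).testBit i) ↔ i = 1 := by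
  intro i
  match i with
  | 0 => decide
  | 1 => decide
  | (i+2) => simp [bit_small 2 (by norm_num) i, bit_small 0 (by norm_num) i]

end Key2
theorem stmt15 {n k : ℕ} (hn : 3 ≤ n) (hk2 : 2 ≤ k) (hkN : k ≤ 2 ^ n - 2) :
    ¬ IsBalancedMatrix (extPow (cubeAdj n) k) := by
  rintro ⟨D, hdiag, hpm, hEq⟩
  have h8 : (8 : ℕ) ≤ 2 ^ n := by
    calc (8 : ℕ) = 2 ^ 3 := rfl
      _ ≤ 2 ^ n := Nat.pow_le_pow_right (by norm_num) hn
  have hN : k + 2 ≤ 2 ^ n := by omega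
  let p0 : Fin (2 ^ n) := ⟨0, by omega⟩
  have hp0 : p0 = ⟨0, by omega⟩ := rfl
  let p1 : Fin (2 ^ n) := ⟨1, by omega⟩
  have hp1 : p1 = ⟨1, by omega⟩ := rfl
  let p2 : Fin (2 ^ n) := ⟨2, by omega⟩
  have hp2 : p2 = ⟨2, by omega⟩ := rfl
  let p3 : Fin (2 ^ n) := ⟨3, by omega⟩
  have hp3 : p3 = ⟨3, by omega⟩ := rfl
  let e1 := tupf (2 ^ n) k p0 p3 hN
  have he1 : e1 = tupf (2 ^ n) k p0 p3 hN := rfl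
  let e2 := tupf (2 ^ n) k p1 p3 hN
  have he2 : e2 = tupf (2 ^ n) k p1 p3 hN := rfl
  let e3 := tupf (2 ^ n) k p1 p2 hN
  have he3 : e3 = tupf (2 ^ n) k p1 p2 hN := rfl
  let e4 := tupf (2 ^ n) k p2 p3 hN
  have he4 : e4 = tupf (2 ^ n) k p2 p3 hN := rfl
  have m1 : StrictMono e1 := tupf_strictMono p0 p3 hN (by norm_num [hp0, hp3]) (by norm_num [hp3])
  have m2 : StrictMono e2 := tupf_strictMono p1 p3 hN (by norm_num [hp1, hp3]) (by norm_num [hp3])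
  have m3 : StrictMono e3 := tupf_strictMono p1 p2 hN (by norm_num [hp1, hp2]) (by norm_num [hp2])
  have m4 : StrictMono e4 := tupf_strictMono p2 p3 hN (by norm_num [hp2, hp3]) (by norm_num [hp3])
  let S1 : {S : Finset (Fin (2 ^ n)) // S.card = k} :=
    ⟨Finset.image e1 Finset.univ, card_image_tupf e1 m1⟩
  have hS1 : S1 = ⟨Finset.image e1 Finset.univ, card_image_tupf e1 m1⟩ := rfl
  let S2 : {S : Finset (Fin (2 ^ n)) // S.card = k} :=
    ⟨Finset.image e2 Finset.univ, card_image_tupf e2 m2⟩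
  have hS2 : S2 = ⟨Finset.image e2 Finset.univ, card_image_tupf e2 m2⟩ := rfl
  let S3 : {S : Finset (Fin (2 ^ n)) // S.card = k} :=
    ⟨Finset.image e3 Finset.univ, card_image_tupf e3 m3⟩
  have hS3 : S3 = ⟨Finset.image e3 Finset.univ, card_image_tupf e3 m3⟩ := rfl
  let S4 : {S : Finset (Fin (2 ^ n)) // S.card = k} :=
    ⟨Finset.image e4 Finset.univ, card_image_tupf e4 m4⟩
  have hS4 : S4 = ⟨Finset.image e4 Finset.univ, card_image_tupf e4 m4⟩ := rfl
  have hE1 : enumOf inferInstance S1.1 S1.2 = e1 := enumOf_image e1 m1 _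
  have hE2 : enumOf inferInstance S2.1 S2.2 = e2 := enumOf_image e2 m2 _
  have hE3 : enumOf inferInstance S3.1 S3.2 = e3 := enumOf_image e3 m3 _
  have hE4 : enumOf inferInstance S4.1 S4.2 = e4 := enumOf_image e4 m4 _
  have hk0 : 0 < k := by omega
  have hk1 : 1 < k := by omega
  let i0 : Fin k := ⟨0, hk0⟩
  have hi0 : i0 = ⟨0, hk0⟩ := rfl
  let i1 : Fin k := ⟨1, hk1⟩
  have hi1 : i1 = ⟨1, hk1⟩ := rfl
  -- values of cubeAdj
  have hA01 : cubeAdj n p0 p1 = 1 := cubeAdj_pair hn p0 p1 0 (by norm_num) hbit01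
  have hA32 : cubeAdj n p3 p2 = 1 := cubeAdj_pair hn p3 p2 0 (by norm_num) hbit32
  have hA13 : cubeAdj n p1 p3 = 1 := cubeAdj_pair hn p1 p3 1 (by norm_num) hbit13
  have hA20 : cubeAdj n p2 p0 = 1 := cubeAdj_pair hn p2 p0 1 (by norm_num) hbit20
  -- entry B(S1,S2) = 1  (token 0 -> 1, at index 0, τ0 = 1)
  have hB12 : extPow (cubeAdj n) k S1 S2 = 1 := by
    rw [extPow_apply, hE1, hE2]
    have := key_sum' (cubeAdj n) e1 e2 1 i0
      (fun j hj => by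
        apply Fin.ext
        have hj0 : j.1 ≠ 0 := fun h => hj (Fin.ext h)
        rw [he1, he2, Equiv.Perm.one_apply, tupf_val, tupf_val]
        simp [hj0])
      (fun j h => by
        have hv := congrArg Fin.val h
        have hu : (e1 i0).1 = 0 := rfl
        rw [hu] at hv
        rw [he2, tupf_val] at hv
        have ha : (p1 : Fin (2 ^ n)).1 = 1 := rfl
        have hb : (p3 : Fin (2 ^ n)).1 = 3 := rfl
        rw [ha, hb] at hv
        split_ifs at hv <;> omega)
      m2.injective
    rw [this]
    have hx : e1 i0 = p0 := rfl
    have hy : e2 ((1 : Equiv.Perm (Fin k)) i0) = p1 := rfl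
    rw [hx, hy, hA01]
    simp
  -- entry B(S2,S3) = 1  (token 3 -> 2, at index 1, τ0 = 1)
  have hB23 : extPow (cubeAdj n) k S2 S3 = 1 := by
    rw [extPow_apply, hE2, hE3]
    have := key_sum' (cubeAdj n) e2 e3 1 i1
      (fun j hj => by
        apply Fin.ext
        have hj1 : j.1 ≠ 1 := fun h => hj (Fin.ext h)
        rw [he2, he3, Equiv.Perm.one_apply, tupf_val, tupf_val]
        simp [hj1])
      (fun j h => by
        have hv := congrArg Fin.val h
        have hu : (e2 i1).1 = 3 := rfl
        rw [hu] at hv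
        rw [he3, tupf_val] at hv
        have ha : (p1 : Fin (2 ^ n)).1 = 1 := rfl
        have hb : (p2 : Fin (2 ^ n)).1 = 2 := rfl
        rw [ha, hb] at hv
        split_ifs at hv <;> omega)
      m3.injective
    rw [this]
    have hx : e2 i1 = p3 := rfl
    have hy : e3 ((1 : Equiv.Perm (Fin k)) i1) = p2 := rfl
    rw [hx, hy, hA32]
    simp
  -- entry B(S4,S1) = 1  (token 2 -> 0, at index 0, τ0 = 1)
  have hB41 : extPow (cubeAdj n) k S4 S1 = 1 := by
    rw [extPow_apply, hE4, hE1]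
    have := key_sum' (cubeAdj n) e4 e1 1 i0
      (fun j hj => by
        apply Fin.ext
        have hj0 : j.1 ≠ 0 := fun h => hj (Fin.ext h)
        rw [he4, he1, Equiv.Perm.one_apply, tupf_val, tupf_val]
        simp [hj0])
      (fun j h => by
        have hv := congrArg Fin.val h
        have hu : (e4 i0).1 = 2 := rfl
        rw [hu] at hv
        rw [he1, tupf_val] at hv
        have ha : (p0 : Fin (2 ^ n)).1 = 0 := rfl
        have hb : (p3 : Fin (2 ^ n)).1 = 3 := rfl
        rw [ha, hb] at hv
        split_ifs at hv <;> omega)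
      m1.injective
    rw [this]
    have hx : e4 i0 = p2 := rfl
    have hy : e1 ((1 : Equiv.Perm (Fin k)) i0) = p0 := rfl
    rw [hx, hy, hA20]
    simp
  -- entry B(S3,S4) = -1  (token 1 -> 3 with swap of first two slots)
  have hne01 : i0 ≠ i1 := by
    intro h
    have := congrArg Fin.val h
    rw [hi0, hi1] at this
    simp at this
  have hB34 : extPow (cubeAdj n) k S3 S4 = -1 := by
    rw [extPow_apply, hE3, hE4]
    have := key_sum' (cubeAdj n) e3 e4 (Equiv.swap i0 i1) i0
      (fun j hj => by
        by_cases hj1 : j = i1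
        · rw [hj1, Equiv.swap_apply_right]
          rfl
        · rw [Equiv.swap_apply_of_ne_of_ne hj hj1]
          apply Fin.ext
          have hj0 : j.1 ≠ 0 := fun h => hj (Fin.ext h)
          have hj1' : j.1 ≠ 1 := fun h => hj1 (Fin.ext h)
          rw [he3, he4, tupf_val, tupf_val]
          simp [hj0, hj1'])
      (fun j h => by
        have hv := congrArg Fin.val h
        have hu : (e3 i0).1 = 1 := rfl
        rw [hu] at hv
        rw [he4, tupf_val] at hv
        have ha : (p2 : Fin (2 ^ n)).1 = 2 := rfl
        have hb : (p3 : Fin (2 ^ n)).1 = 3 := rfl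
        rw [ha, hb] at hv
        split_ifs at hv <;> omega)
      m4.injective
    rw [this]
    have hx : e3 i0 = p1 := rfl
    have hy : e4 (Equiv.swap i0 i1 i0) = p3 := by rw [Equiv.swap_apply_left]; rfl
    rw [hx, hy, hA13, Equiv.Perm.sign_swap hne01]
    simp
  -- balance equations
  have hDBD : ∀ S T : {S : Finset (Fin (2 ^ n)) // S.card = k},
      (D * extPow (cubeAdj n) k * D) S T
        = D S S * extPow (cubeAdj n) k S T * D T T := by
    intro S T
    rw [Matrix.mul_apply, Finset.sum_eq_single T]
    · rw [Matrix.mul_apply, Finset.sum_eq_single S]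
      · intro x _ hx
        rw [hdiag (Ne.symm hx), zero_mul]
      · simp
    · intro y _ hy
      rw [hdiag hy, mul_zero]
    · simp
  have q12 : D S1 S1 * D S2 S2 = 1 := by
    have h := congrFun (congrFun hEq S1) S2
    rw [hDBD S1 S2, hB12, Matrix.of_apply, hB12] at h
    simpa using h
  have q23 : D S2 S2 * D S3 S3 = 1 := by
    have h := congrFun (congrFun hEq S2) S3
    rw [hDBD S2 S3, hB23, Matrix.of_apply, hB23] at h
    simpa using h
  have q41 : D S4 S4 * D S1 S1 = 1 := by
    have h := congrFun (congrFun hEq S4) S1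
    rw [hDBD S4 S1, hB41, Matrix.of_apply, hB41] at h
    simpa using h
  have q34 : D S3 S3 * D S4 S4 = -1 := by
    have h := congrFun (congrFun hEq S3) S4
    rw [hDBD S3 S4, hB34, Matrix.of_apply, hB34] at h
    simp only [abs_neg, abs_one] at h
    nlinarith [h]
  rcases hpm S1 with h1 | h1 <;> rcases hpm S2 with h2 | h2 <;>
    rcases hpm S3 with h3 | h3 <;> rcases hpm S4 with h4 | h4 <;>
      simp only [h1, h2, h3, h4] at q12 q23 q34 q41 <;>
        linarith
end

section
/- Let n ≥ 4 and let A be a signed graph on n vertices whose underlying graph contains the claw K_{1,3} as a subgraph, i.e. there exist pairwise distinct vertices a, b, c, d in Fin n with |A(a,b)| = |A(a,c)| = |A(a,d)| = 1. Then for every integer k with 2 ≤ k ≤ n−2, the exterior power ∧^k A is not balanced. -/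
open Matrix Finset

section AUX
open Equiv
lemma enumOf_eq {n k : ℕ} (S : Finset (Fin n)) (h : S.card = k) :
    enumOf inferInstance S h = fun i => S.orderEmbOfFin h i := rfl

lemma sum_alt {n k : ℕ} (S : Finset (Fin n)) (hS : S.card = k) (F : (Fin k → Fin n) → ℝ) :
    ∑ x : Fin k → Fin n, alt n k x ⟨S, hS⟩ * F x =
      (Real.sqrt (Nat.factorial k))⁻¹ *
        ∑ π : Equiv.Perm (Fin k), ((Equiv.Perm.sign π : ℤ) : ℝ) *
          F (fun i => S.orderEmbOfFin hS (π i)) := by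
  unfold alt altOf
  simp only [Matrix.of_apply, enumOf_eq]
  rw [Finset.mul_sum]
  have step1 : ∀ x : Fin k → Fin n,
      ((Real.sqrt (Nat.factorial k))⁻¹ *
        ∑ π : Equiv.Perm (Fin k),
          if x = (fun i => S.orderEmbOfFin hS i) ∘ π then ((Equiv.Perm.sign π : ℤ) : ℝ) else 0) * F x
      = ∑ π : Equiv.Perm (Fin k),
          if x = (fun i => S.orderEmbOfFin hS i) ∘ π then
            (Real.sqrt (Nat.factorial k))⁻¹ * (((Equiv.Perm.sign π : ℤ) : ℝ) * F x) else 0 := by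
    intro x
    rw [mul_assoc, Finset.sum_mul, Finset.mul_sum]
    refine Finset.sum_congr rfl fun π _ => ?_
    split_ifs <;> ring
  refine (Finset.sum_congr rfl fun x _ => step1 x).trans ?_
  rw [Finset.sum_comm]
  refine Finset.sum_congr rfl fun π _ => ?_
  have := Finset.sum_ite_eq' (Finset.univ : Finset (Fin k → Fin n))
    ((fun i => S.orderEmbOfFin hS i) ∘ π)
    (fun x => (Real.sqrt (Nat.factorial k))⁻¹ * (((Equiv.Perm.sign π : ℤ) : ℝ) * F x))
  simp only [Finset.mem_univ, if_true] at this
  rw [this]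
  ring_nf
  rfl

lemma pos_eq_filter_card {n m : ℕ} (S : Finset (Fin n)) (hS : S.card = m + 1) (p : Fin (m+1)) :
    (p : ℕ) = (S.filter (· < S.orderEmbOfFin hS p)).card := by
  classical
  have himg : S.filter (· < S.orderEmbOfFin hS p) =
      (Finset.Iio p).image (fun j => S.orderEmbOfFin hS j) := by
    ext x
    simp only [Finset.mem_filter, Finset.mem_image, Finset.mem_Iio]
    constructor
    · rintro ⟨hxS, hxlt⟩
      obtain ⟨j, hj⟩ : ∃ j, S.orderEmbOfFin hS j = x := by
        have : x ∈ Set.range (S.orderEmbOfFin hS) := by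
          rw [Finset.range_orderEmbOfFin]; exact hxS
        exact this
      refine ⟨j, ?_, hj⟩
      have := (S.orderEmbOfFin hS).strictMono.lt_iff_lt (a := j) (b := p)
      rw [← this]; rw [hj]; exact hxlt
    · rintro ⟨j, hjp, rfl⟩
      exact ⟨Finset.orderEmbOfFin_mem S hS j, (S.orderEmbOfFin hS).strictMono hjp⟩
  rw [himg, Finset.card_image_of_injective _ (S.orderEmbOfFin hS).injective, Fin.card_Iio]

lemma extPow_entry {n m : ℕ} (A : Matrix (Fin n) (Fin n) ℝ)
    (C : Finset (Fin n)) (u v : Fin n) (hu : u ∉ C) (hv : v ∉ C) (huv : u ≠ v)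
    (hC : C.card = m)
    (hS : (insert u C).card = m + 1) (hT : (insert v C).card = m + 1) :
    extPow A (m + 1) ⟨insert u C, hS⟩ ⟨insert v C, hT⟩ =
      (-1 : ℝ) ^ ((C.filter (· < u)).card + (C.filter (· < v)).card) * A u v := by
  classical
  set S := insert u C with hSdef
  set T := insert v C with hTdef
  set eS := S.orderEmbOfFin hS with heS
  set eT := T.orderEmbOfFin hT with heT
  set eC := C.orderEmbOfFin hC with heC
  obtain ⟨p, hp⟩ : ∃ p, eS p = u := by
    have : u ∈ Set.range eS := by rw [heS, Finset.range_orderEmbOfFin]; exact mem_insert_self u C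
    exact this
  obtain ⟨q, hq⟩ : ∃ q, eT q = v := by
    have : v ∈ Set.range eT := by rw [heT, Finset.range_orderEmbOfFin]; exact mem_insert_self v C
    exact this
  have hSC : ∀ j : Fin m, eS (p.succAbove j) = eC j := by
    have huniq : (fun j : Fin m => eS (p.succAbove j)) = fun j => C.orderEmbOfFin hC j := by
      have := Finset.orderEmbOfFin_unique hC (f := fun j : Fin m => eS (p.succAbove j))
        (fun x => ?_) ((S.orderEmbOfFin hS).strictMono.comp (Fin.strictMono_succAbove p))
      · exact this
      · have h1 : eS (p.succAbove x) ∈ S := Finset.orderEmbOfFin_mem S hS _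
        have h2 : eS (p.succAbove x) ≠ u := by
          rw [← hp]; intro h
          exact Fin.succAbove_ne p x (eS.injective h)
        exact Finset.mem_of_mem_insert_of_ne h1 h2
    intro j; exact congrFun huniq j
  have hTC : ∀ j : Fin m, eT (q.succAbove j) = eC j := by
    have huniq : (fun j : Fin m => eT (q.succAbove j)) = fun j => C.orderEmbOfFin hC j := by
      have := Finset.orderEmbOfFin_unique hC (f := fun j : Fin m => eT (q.succAbove j))
        (fun x => ?_) ((T.orderEmbOfFin hT).strictMono.comp (Fin.strictMono_succAbove q))
      · exact this
      · have h1 : eT (q.succAbove x) ∈ T := Finset.orderEmbOfFin_mem T hT _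
        have h2 : eT (q.succAbove x) ≠ v := by
          rw [← hq]; intro h
          exact Fin.succAbove_ne q x (eT.injective h)
        exact Finset.mem_of_mem_insert_of_ne h1 h2
    intro j; exact congrFun huniq j
  set c : Equiv.Perm (Fin (m+1)) := q.cycleRange⁻¹ * p.cycleRange with hc
  have hcp : c p = q := by
    rw [hc]
    simp only [Equiv.Perm.mul_apply, Fin.cycleRange_self]
    rw [Equiv.Perm.inv_def, Equiv.symm_apply_eq]
    exact (Fin.cycleRange_self q).symm
  have hcsa : ∀ j : Fin m, c (p.succAbove j) = q.succAbove j := by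
    intro j
    rw [hc]
    simp only [Equiv.Perm.mul_apply, Fin.cycleRange_succAbove]
    rw [Equiv.Perm.inv_def, Equiv.symm_apply_eq]
    exact (Fin.cycleRange_succAbove q j).symm
  have hsign : (Equiv.Perm.sign c : ℤ) = (-1 : ℤ) ^ ((p : ℕ) + (q : ℕ)) := by
    rw [hc]
    rw [Equiv.Perm.sign_mul, Equiv.Perm.sign_inv]
    simp only [Fin.sign_cycleRange]
    push_cast
    rw [pow_add]
    ring
  -- the core pointwise identity
  have term_eq : ∀ (π σ : Equiv.Perm (Fin (m+1))) (i : Fin (m+1)),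
      A (eS (π i)) (eT (σ i)) *
        ∏ j ∈ Finset.univ.erase i, (if eS (π j) = eT (σ j) then (1:ℝ) else 0)
      = if σ = c * π ∧ π i = p then A u v else 0 := by
    intro π σ i
    split_ifs with h
    · obtain ⟨hσ, hπi⟩ := h
      have hprod : ∏ j ∈ Finset.univ.erase i, (if eS (π j) = eT (σ j) then (1:ℝ) else 0) = 1 := by
        refine Finset.prod_eq_one fun j hj => ?_
        have hji : j ≠ i := (Finset.mem_erase.1 hj).1
        have hπj : π j ≠ p := by rw [← hπi]; exact fun h' => hji (π.injective h')
        obtain ⟨j', hj'⟩ := Fin.exists_succAbove_eq hπj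
        rw [if_pos]
        have h1 : eS (π j) = eC j' := by rw [← hj']; exact hSC j'
        have h2 : eT (σ j) = eC j' := by
          rw [hσ, Equiv.Perm.mul_apply, ← hj', hcsa]; exact hTC j'
        rw [h1, h2]
      rw [hprod, mul_one, hπi, hp]
      congr 1
      rw [hσ, Equiv.Perm.mul_apply, hπi, hcp, hq]
    · by_cases hall : ∀ j ∈ Finset.univ.erase i, eS (π j) = eT (σ j)
      · exfalso
        apply h
        have hπi : π i = p := by
          by_contra hne
          obtain ⟨j0, hj0⟩ : ∃ j0, π j0 = p := ⟨π⁻¹ p, by simp⟩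
          have hj0i : j0 ≠ i := fun e => hne (e ▸ hj0)
          have heq := hall j0 (by simp [hj0i])
          rw [hj0, hp] at heq
          have hmem : u ∈ T := heq ▸ Finset.orderEmbOfFin_mem T hT (σ j0)
          rcases Finset.mem_insert.1 hmem with h' | h'
          · exact huv h'
          · exact hu h'
        have hσi : σ i = q := by
          by_contra hne
          obtain ⟨j0, hj0⟩ : ∃ j0, σ j0 = q := ⟨σ⁻¹ q, by simp⟩
          have hj0i : j0 ≠ i := fun e => hne (e ▸ hj0)
          have heq := hall j0 (by simp [hj0i])
          rw [hj0, hq] at heq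
          have hmem : v ∈ S := heq ▸ Finset.orderEmbOfFin_mem S hS (π j0)
          rcases Finset.mem_insert.1 hmem with h' | h'
          · exact huv h'.symm
          · exact hv h'
        refine ⟨Equiv.ext fun x => ?_, hπi⟩
        by_cases hxi : x = i
        · subst hxi
          rw [hσi, Equiv.Perm.mul_apply, hπi, hcp]
        · have hπx : π x ≠ p := by
            rw [← hπi]; exact fun e => hxi (π.injective e)
          obtain ⟨j', hj'⟩ := Fin.exists_succAbove_eq hπx
          have h1 : eS (π x) = eC j' := by rw [← hj']; exact hSC j'
          have h2 : eT (σ x) = eC j' := by rw [← hall x (by simp [hxi])]; exact h1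
          have h3 : σ x = q.succAbove j' := eT.injective (by rw [h2, hTC])
          rw [h3, Equiv.Perm.mul_apply, ← hj', hcsa]
      · push_neg at hall
        obtain ⟨j, hjmem, hjne⟩ := hall
        have hz : (if eS (π j) = eT (σ j) then (1:ℝ) else 0) = 0 := if_neg hjne
        rw [Finset.prod_eq_zero hjmem hz, mul_zero]
  -- expand the matrix product
  have expand : extPow A (m+1) ⟨S, hS⟩ ⟨T, hT⟩
      = ∑ y : Fin (m+1) → Fin n, alt n (m+1) y ⟨T, hT⟩ *
          (∑ x : Fin (m+1) → Fin n, alt n (m+1) x ⟨S, hS⟩ * cartPow A (m+1) x y) := by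
    rw [extPow, Matrix.mul_apply]
    simp only [Matrix.mul_apply, Matrix.transpose_apply]
    exact Finset.sum_congr rfl fun y _ => mul_comm _ _
  rw [expand, sum_alt T hT (fun y => ∑ x : Fin (m+1) → Fin n,
    alt n (m+1) x ⟨S, hS⟩ * cartPow A (m+1) x y)]
  simp only [sum_alt S hS]
  simp only [cartPow, Matrix.of_apply]
  simp only [← heS, ← heT]
  simp only [term_eq]
  -- sum over i
  have inner_i : ∀ (σ π : Equiv.Perm (Fin (m+1))),
      (∑ i : Fin (m+1), if σ = c * π ∧ π i = p then A u v else 0)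
        = if σ = c * π then A u v else 0 := by
    intro σ π
    by_cases hcase : σ = c * π
    · simp only [hcase, true_and, if_pos rfl]
      have hiff : ∀ i : Fin (m+1), (π i = p) = (i = π.symm p) := by
        intro i
        apply propext
        constructor
        · intro e; simp [← e]
        · intro e; simp [e]
      simp only [hiff]
      have := Finset.sum_ite_eq' (Finset.univ : Finset (Fin (m+1))) (π.symm p)
        (fun _ => A u v)
      simp only [Finset.mem_univ, if_true] at this
      exact this
    · simp [hcase]
  simp only [inner_i]
  -- sum over π
  have inner_pi : ∀ σ : Equiv.Perm (Fin (m+1)),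
      (∑ π : Equiv.Perm (Fin (m+1)), ((Equiv.Perm.sign π : ℤ) : ℝ) *
        (if σ = c * π then A u v else 0))
      = ((Equiv.Perm.sign (c⁻¹ * σ) : ℤ) : ℝ) * A u v := by
    intro σ
    have hiff : ∀ π : Equiv.Perm (Fin (m+1)), (σ = c * π) = (π = c⁻¹ * σ) := by
      intro π
      apply propext
      constructor
      · intro e; rw [e]; group
      · intro e; rw [e]; group
    simp only [hiff, mul_ite, mul_zero]
    have := Finset.sum_ite_eq' (Finset.univ : Finset (Equiv.Perm (Fin (m+1)))) (c⁻¹ * σ)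
      (fun π => ((Equiv.Perm.sign π : ℤ) : ℝ) * A u v)
    simp only [Finset.mem_univ, if_true] at this
    exact this
  simp only [inner_pi]
  -- collapse signs
  have hss : ∀ σ : Equiv.Perm (Fin (m+1)),
      ((Equiv.Perm.sign σ : ℤ) : ℝ) * ((Equiv.Perm.sign (c⁻¹ * σ) : ℤ) : ℝ)
        = ((Equiv.Perm.sign c : ℤ) : ℝ) := by
    intro σ
    rw [Equiv.Perm.sign_mul, Equiv.Perm.sign_inv]
    rcases Int.units_eq_one_or (Equiv.Perm.sign σ) with h | h <;>
      rcases Int.units_eq_one_or (Equiv.Perm.sign c) with h2 | h2 <;>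
        simp [h, h2]
  have per_term : ∀ σ : Equiv.Perm (Fin (m+1)),
      ((Equiv.Perm.sign σ : ℤ) : ℝ) *
        ((Real.sqrt (Nat.factorial (m+1)))⁻¹ *
          (((Equiv.Perm.sign (c⁻¹ * σ) : ℤ) : ℝ) * A u v))
      = (Real.sqrt (Nat.factorial (m+1)))⁻¹ * (((Equiv.Perm.sign c : ℤ) : ℝ) * A u v) := by
    intro σ
    rw [← hss σ]
    ring
  simp only [per_term]
  rw [Finset.sum_const, Finset.card_univ, Fintype.card_perm, Fintype.card_fin]
  rw [nsmul_eq_mul]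
  have hfac : (Real.sqrt (Nat.factorial (m+1)))⁻¹ *
      ((Nat.factorial (m+1) : ℝ) *
        ((Real.sqrt (Nat.factorial (m+1)))⁻¹ * (((Equiv.Perm.sign c : ℤ) : ℝ) * A u v)))
      = ((Equiv.Perm.sign c : ℤ) : ℝ) * A u v := by
    have hpos : (0:ℝ) < (Nat.factorial (m+1) : ℝ) := by
      exact_mod_cast Nat.factorial_pos (m+1)
    rw [show (Real.sqrt (Nat.factorial (m+1)))⁻¹ *
        ((Nat.factorial (m+1) : ℝ) *
          ((Real.sqrt (Nat.factorial (m+1)))⁻¹ * (((Equiv.Perm.sign c : ℤ) : ℝ) * A u v)))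
      = ((Real.sqrt (Nat.factorial (m+1)))⁻¹ * (Real.sqrt (Nat.factorial (m+1)))⁻¹ *
          (Nat.factorial (m+1) : ℝ)) * (((Equiv.Perm.sign c : ℤ) : ℝ) * A u v) by ring]
    rw [← mul_inv, Real.mul_self_sqrt hpos.le, inv_mul_cancel₀ hpos.ne', one_mul]
  rw [hfac]
  -- final sign computation
  have hpcard : (p : ℕ) = (C.filter (· < u)).card := by
    have := pos_eq_filter_card S hS p
    rw [← heS, hp] at this
    rw [this, hSdef, Finset.filter_insert, if_neg (lt_irrefl u)]
  have hqcard : (q : ℕ) = (C.filter (· < v)).card := by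
    have := pos_eq_filter_card T hT q
    rw [← heT, hq] at this
    rw [this, hTdef, Finset.filter_insert, if_neg (lt_irrefl v)]
  rw [hsign]
  push_cast
  rw [hpcard, hqcard]

lemma diag_sandwich {ι : Type*} [Fintype ι] [DecidableEq ι] (D B : Matrix ι ι ℝ)
    (hD : D.IsDiag) (i j : ι) : (D * B * D) i j = D i i * B i j * D j j := by
  rw [Matrix.mul_apply]
  rw [Finset.sum_eq_single j
    (fun y _ hy => by rw [hD hy, mul_zero])
    (fun hj => absurd (Finset.mem_univ j) hj)]
  congr 1
  rw [Matrix.mul_apply]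
  rw [Finset.sum_eq_single i
    (fun x _ hx => by rw [hD (Ne.symm hx), zero_mul])
    (fun hi => absurd (Finset.mem_univ i) hi)]


end AUX

set_option maxHeartbeats 1000000 in
theorem stmt16 {n k : ℕ} (hn : 4 ≤ n)
    (A : Matrix (Fin n) (Fin n) ℝ) (hA : IsSignedMatrix A)
    (a b c d : Fin n)
    (hab : a ≠ b) (hac : a ≠ c) (had : a ≠ d)
    (hbc : b ≠ c) (hbd : b ≠ d) (hcd : c ≠ d)
    (eab : |A a b| = 1) (eac : |A a c| = 1) (ead : |A a d| = 1)
    (hk2 : 2 ≤ k) (hkn : k ≤ n - 2) :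
    ¬ IsBalancedMatrix (extPow A k) := by
  classical
  obtain ⟨m, rfl⟩ : ∃ m, k = m + 2 := ⟨k - 2, by omega⟩
  rintro ⟨D, hDdiag, hDpm, hDeq⟩
  -- choose a reservoir set R
  have hcard4 : ({a,b,c,d} : Finset (Fin n)).card = 4 := by
    rw [Finset.card_insert_of_notMem (by simp [hab, hac, had]),
      Finset.card_insert_of_notMem (by simp [hbc, hbd]),
      Finset.card_insert_of_notMem (by simp [hcd]), Finset.card_singleton]
  have hm : m ≤ (Finset.univ \ ({a,b,c,d} : Finset (Fin n))).card := by
    rw [Finset.card_sdiff_of_subset (Finset.subset_univ _), Finset.card_univ, Fintype.card_fin, hcard4]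
    omega
  obtain ⟨R, hRsub, hRcard⟩ := Finset.exists_subset_card_eq hm
  have hnotR : ∀ x ∈ ({a,b,c,d} : Finset (Fin n)), x ∉ R :=
    fun x hx h => (Finset.mem_sdiff.1 (hRsub h)).2 hx
  have haR : a ∉ R := hnotR a (by simp)
  have hbR : b ∉ R := hnotR b (by simp)
  have hcR : c ∉ R := hnotR c (by simp)
  have hdR : d ∉ R := hnotR d (by simp)
  -- the three (m+1)-element common parts
  set Cb : Finset (Fin n) := insert b R with hCb
  set Cc : Finset (Fin n) := insert c R with hCc
  set Cd : Finset (Fin n) := insert d R with hCd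
  have hCbcard : Cb.card = m + 1 := by rw [hCb, Finset.card_insert_of_notMem hbR, hRcard]
  have hCccard : Cc.card = m + 1 := by rw [hCc, Finset.card_insert_of_notMem hcR, hRcard]
  have hCdcard : Cd.card = m + 1 := by rw [hCd, Finset.card_insert_of_notMem hdR, hRcard]
  have haCb : a ∉ Cb := by simp [hCb, hab, haR]
  have haCc : a ∉ Cc := by simp [hCc, hac, haR]
  have haCd : a ∉ Cd := by simp [hCd, had, haR]
  have hbCc : b ∉ Cc := by simp [hCc, hbc, hbR]
  have hbCd : b ∉ Cd := by simp [hCd, hbd, hbR]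
  have hcCb : c ∉ Cb := by simp [hCb, hbc.symm ,hcR]
  have hcCd : c ∉ Cd := by simp [hCd, hcd, hcR]
  have hdCb : d ∉ Cb := by simp [hCb, hbd.symm, hdR]
  have hdCc : d ∉ Cc := by simp [hCc, hcd.symm, hdR]
  -- cardinalities of the six vertices
  have p1 : (insert b Cc).card = m + 2 := by rw [Finset.card_insert_of_notMem hbCc, hCccard]
  have p2 : (insert a Cc).card = m + 2 := by rw [Finset.card_insert_of_notMem haCc, hCccard]
  have p3 : (insert d Cc).card = m + 2 := by rw [Finset.card_insert_of_notMem hdCc, hCccard]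
  have p4 : (insert a Cd).card = m + 2 := by rw [Finset.card_insert_of_notMem haCd, hCdcard]
  have p5 : (insert b Cd).card = m + 2 := by rw [Finset.card_insert_of_notMem hbCd, hCdcard]
  have p6 : (insert a Cb).card = m + 2 := by rw [Finset.card_insert_of_notMem haCb, hCbcard]
  have p3' : (insert c Cd).card = m + 2 := by rw [Finset.card_insert_of_notMem hcCd, hCdcard]
  have p5' : (insert d Cb).card = m + 2 := by rw [Finset.card_insert_of_notMem hdCb, hCbcard]
  have p1' : (insert c Cb).card = m + 2 := by rw [Finset.card_insert_of_notMem hcCb, hCbcard]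
  set V1 : {S : Finset (Fin n) // S.card = m + 2} := ⟨insert b Cc, p1⟩ with hV1
  set V2 : {S : Finset (Fin n) // S.card = m + 2} := ⟨insert a Cc, p2⟩ with hV2
  set V3 : {S : Finset (Fin n) // S.card = m + 2} := ⟨insert d Cc, p3⟩ with hV3
  set V4 : {S : Finset (Fin n) // S.card = m + 2} := ⟨insert a Cd, p4⟩ with hV4
  set V5 : {S : Finset (Fin n) // S.card = m + 2} := ⟨insert b Cd, p5⟩ with hV5
  set V6 : {S : Finset (Fin n) // S.card = m + 2} := ⟨insert a Cb, p6⟩ with hV6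
  have hV3eq : (⟨insert c Cd, p3'⟩ : {S : Finset (Fin n) // S.card = m + 2}) = V3 :=
    Subtype.ext (show insert c (insert d R) = insert d (insert c R) from Finset.insert_comm c d R)
  have hV5eq : (⟨insert d Cb, p5'⟩ : {S : Finset (Fin n) // S.card = m + 2}) = V5 :=
    Subtype.ext (show insert d (insert b R) = insert b (insert d R) from Finset.insert_comm d b R)
  have hV1eq : (⟨insert c Cb, p1'⟩ : {S : Finset (Fin n) // S.card = m + 2}) = V1 :=
    Subtype.ext (show insert c (insert b R) = insert b (insert c R) from Finset.insert_comm c b R)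
  -- the six entries
  have E12 : extPow A (m+2) V1 V2 =
      (-1 : ℝ) ^ ((Cc.filter (· < b)).card + (Cc.filter (· < a)).card) * A b a :=
    extPow_entry A Cc b a hbCc haCc hab.symm hCccard p1 p2
  have E23 : extPow A (m+2) V2 V3 =
      (-1 : ℝ) ^ ((Cc.filter (· < a)).card + (Cc.filter (· < d)).card) * A a d :=
    extPow_entry A Cc a d haCc hdCc had hCccard p2 p3
  have E34 : extPow A (m+2) V3 V4 =
      (-1 : ℝ) ^ ((Cd.filter (· < c)).card + (Cd.filter (· < a)).card) * A c a := by
    have h := extPow_entry A Cd c a hcCd haCd hac.symm hCdcard p3' p4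
    rw [hV3eq] at h
    exact h
  have E45 : extPow A (m+2) V4 V5 =
      (-1 : ℝ) ^ ((Cd.filter (· < a)).card + (Cd.filter (· < b)).card) * A a b :=
    extPow_entry A Cd a b haCd hbCd hab hCdcard p4 p5
  have E56 : extPow A (m+2) V5 V6 =
      (-1 : ℝ) ^ ((Cb.filter (· < d)).card + (Cb.filter (· < a)).card) * A d a := by
    have h := extPow_entry A Cb d a hdCb haCb had.symm hCbcard p5' p6
    rw [hV5eq] at h
    exact h
  have E61 : extPow A (m+2) V6 V1 =
      (-1 : ℝ) ^ ((Cb.filter (· < a)).card + (Cb.filter (· < c)).card) * A a c := by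
    have h := extPow_entry A Cb a c haCb hcCb hac hCbcard p6 p1'
    rw [hV1eq] at h
    exact h
  -- balancedness per entry
  have key : ∀ V W, D V V * extPow A (m+2) V W * D W W = |extPow A (m+2) V W| := by
    intro V W
    have h := congrFun (congrFun hDeq V) W
    rw [diag_sandwich D (extPow A (m+2)) hDdiag V W] at h
    exact h
  have hDsq : ∀ V, D V V * D V V = 1 := by
    intro V
    rcases hDpm V with h | h <;> rw [h] <;> norm_num
  -- the product of the six entries around the cycle
  set M12 := extPow A (m+2) V1 V2
  set M23 := extPow A (m+2) V2 V3
  set M34 := extPow A (m+2) V3 V4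
  set M45 := extPow A (m+2) V4 V5
  set M56 := extPow A (m+2) V5 V6
  set M61 := extPow A (m+2) V6 V1
  have Hprod : (D V1 V1 * M12 * D V2 V2) * (D V2 V2 * M23 * D V3 V3) *
      (D V3 V3 * M34 * D V4 V4) * (D V4 V4 * M45 * D V5 V5) *
      (D V5 V5 * M56 * D V6 V6) * (D V6 V6 * M61 * D V1 V1)
      = |M12| * |M23| * |M34| * |M45| * |M56| * |M61| := by
    rw [key V1 V2, key V2 V3, key V3 V4, key V4 V5, key V5 V6, key V6 V1]
  have Hcycle : M12 * M23 * M34 * M45 * M56 * M61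
      = |M12| * |M23| * |M34| * |M45| * |M56| * |M61| := by
    calc M12 * M23 * M34 * M45 * M56 * M61
        = (D V1 V1 * D V1 V1) * (D V2 V2 * D V2 V2) * (D V3 V3 * D V3 V3) *
          (D V4 V4 * D V4 V4) * (D V5 V5 * D V5 V5) * (D V6 V6 * D V6 V6) *
          (M12 * M23 * M34 * M45 * M56 * M61) := by
          rw [hDsq V1, hDsq V2, hDsq V3, hDsq V4, hDsq V5, hDsq V6]; ring
      _ = (D V1 V1 * M12 * D V2 V2) * (D V2 V2 * M23 * D V3 V3) *
          (D V3 V3 * M34 * D V4 V4) * (D V4 V4 * M45 * D V5 V5) *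
          (D V5 V5 * M56 * D V6 V6) * (D V6 V6 * M61 * D V1 V1) := by ring
      _ = _ := Hprod
  -- symmetry of A
  have hsymm : ∀ x y : Fin n, A x y = A y x := by
    intro x y
    exact (hA.1.apply y x)
  -- squares of the edge values
  have sqab : A a b * A a b = 1 := by
    have h : A a b ^ 2 = 1 := by rw [← sq_abs, eab, one_pow]
    nlinarith [h]
  have sqac : A a c * A a c = 1 := by
    have h : A a c ^ 2 = 1 := by rw [← sq_abs, eac, one_pow]
    nlinarith [h]
  have sqad : A a d * A a d = 1 := by
    have h : A a d ^ 2 = 1 := by rw [← sq_abs, ead, one_pow]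
    nlinarith [h]
  -- indicator counting
  have hNins : ∀ (w x : Fin n), w ∉ R →
      (((insert w R)).filter (· < x)).card
        = (R.filter (· < x)).card + (if w < x then 1 else 0) := by
    intro w x hw
    rw [Finset.filter_insert]
    split_ifs with h
    · rw [Finset.card_insert_of_notMem (fun hmem => hw (Finset.mem_filter.1 hmem).1)]
    · simp
  have tri : ∀ x y : Fin n, x ≠ y →
      (if x < y then (1:ℕ) else 0) + (if y < x then 1 else 0) = 1 := by
    intro x y hxy
    rcases lt_or_gt_of_ne hxy with h | h
    · rw [if_pos h, if_neg (lt_asymm h)]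
    · rw [if_neg (lt_asymm h), if_pos h]
  have hodd : Odd (((Cc.filter (· < b)).card + (Cc.filter (· < a)).card)
      + ((Cc.filter (· < a)).card + (Cc.filter (· < d)).card)
      + ((Cd.filter (· < c)).card + (Cd.filter (· < a)).card)
      + ((Cd.filter (· < a)).card + (Cd.filter (· < b)).card)
      + ((Cb.filter (· < d)).card + (Cb.filter (· < a)).card)
      + ((Cb.filter (· < a)).card + (Cb.filter (· < c)).card)) := by
    rw [hCb, hCc, hCd]
    rw [hNins c b hcR, hNins c a hcR, hNins c d hcR,
        hNins d c hdR, hNins d a hdR, hNins d b hdR,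
        hNins b d hbR, hNins b a hbR, hNins b c hbR]
    have t1 := tri c b (hbc.symm)
    have t2 := tri c d hcd
    have t3 := tri d b (hbd.symm)
    rw [Nat.odd_iff]
    omega
  -- value of the cycle product
  have hEprodval : M12 * M23 * M34 * M45 * M56 * M61 = -1 := by
    rw [E12, E23, E34, E45, E56, E61]
    rw [hsymm b a, hsymm c a, hsymm d a]
    rw [show ∀ (x1 x2 x3 x4 x5 x6 y1 y2 y3 : ℝ),
      (x1 * y1) * (x2 * y3) * (x3 * y2) * (x4 * y1) * (x5 * y3) * (x6 * y2)
        = (x1 * x2 * x3 * x4 * x5 * x6) * ((y1 * y1) * (y2 * y2) * (y3 * y3))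
      from fun _ _ _ _ _ _ _ _ _ => by ring]
    rw [sqab, sqac, sqad]
    rw [← pow_add, ← pow_add, ← pow_add, ← pow_add, ← pow_add]
    rw [Odd.neg_one_pow hodd]
    ring
  -- absolute values are 1
  have absval : ∀ (e : ℕ) (x : ℝ), |x| = 1 → |(-1:ℝ)^e * x| = 1 := by
    intro e x hx
    rw [abs_mul, abs_pow, abs_neg, abs_one, one_pow, one_mul, hx]
  have habs12 : |M12| = 1 := by rw [E12, hsymm b a]; exact absval _ _ eab
  have habs23 : |M23| = 1 := by rw [E23]; exact absval _ _ ead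
  have habs34 : |M34| = 1 := by rw [E34, hsymm c a]; exact absval _ _ eac
  have habs45 : |M45| = 1 := by rw [E45]; exact absval _ _ eab
  have habs56 : |M56| = 1 := by rw [E56, hsymm d a]; exact absval _ _ ead
  have habs61 : |M61| = 1 := by rw [E61]; exact absval _ _ eac
  rw [hEprodval, habs12, habs23, habs34, habs45, habs56, habs61] at Hcycle
  norm_num at Hcycle
end
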